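/- If (n, m, k, ℓ) are positive integers satisfying F^(k)_n · F^(k)_m = P_ℓ with k ≥ 3, n > m ≥ 3 and n ≥ k + 2, then |γ^ℓ · α^{−(n−1)} · (2√2 · f_k(α) · F^(k)_m)^{−1} − 1| < 3/α^n, where γ = 1 + √2, α = α(k) is the dominant root of Ψ_k, and f_k(z) = (z − 1)/(2 + (k+1)(z − 2)). -/

import Mathlib

/-- The Pell sequence: `P 0 = 0`, `P 1 = 1`, `P (ℓ+2) = 2 P (ℓ+1) + P ℓ`. -/
def pell : ℕ → ℤ
  | 0 => 0
  | 1 => 1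
  | n + 2 => 2 * pell (n + 1) + pell n

/-- `kfib k j` is the `k`-generalized Fibonacci number `F⁽ᵏ⁾_n` with shifted index
`j = n + k - 2` (so `j = 0` corresponds to `n = 2 - k`).  Thus `kfib k j = 0` for
`0 ≤ j ≤ k - 2` (these are `F⁽ᵏ⁾_{2-k} = ⋯ = F⁽ᵏ⁾_0 = 0`), `kfib k (k - 1) = 1`
(this is `F⁽ᵏ⁾_1 = 1`), and every later term is the sum of the preceding `k` terms
(junk value `0` if `k < 2`). -/
def kfib (k : ℕ) : ℕ → ℤ
  | j =>
    if k < 2 then 0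
    else if j < k - 1 then 0
    else if j = k - 1 then 1
    else ∑ i ∈ Finset.range k, kfib k (j - 1 - i)
decreasing_by omega


lemma kfib_def' (k j : ℕ) : kfib k j =
    if k < 2 then 0
    else if j < k - 1 then 0
    else if j = k - 1 then 1
    else ∑ i ∈ Finset.range k, kfib k (j - 1 - i) := by
  rw [kfib]

lemma kfib_zero (k j : ℕ) (hk : 2 ≤ k) (h : j < k - 1) : kfib k j = 0 := by
  rw [kfib_def', if_neg (by omega), if_pos h]

lemma kfib_one (k : ℕ) (hk : 2 ≤ k) : kfib k (k - 1) = 1 := by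
  rw [kfib_def', if_neg (by omega), if_neg (by omega), if_pos rfl]

lemma kfib_rec (k j : ℕ) (hk : 2 ≤ k) (h : k ≤ j) :
    kfib k j = ∑ i ∈ Finset.range k, kfib k (j - 1 - i) := by
  rw [kfib_def', if_neg (by omega), if_neg (by omega), if_neg (by omega)]

lemma kfib_nonneg (k : ℕ) (j : ℕ) : 0 ≤ kfib k j := by
  induction j using Nat.strong_induction_on with
  | _ j ih =>
    rw [kfib_def']
    split
    · exact le_refl 0
    · split
      · exact le_refl 0
      · split
        · exact zero_le_one
        · exact Finset.sum_nonneg fun i hi => ih _ (by omega)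

lemma kfib_pos (k j : ℕ) (hk : 2 ≤ k) (h : k - 1 ≤ j) : 1 ≤ kfib k j := by
  induction j using Nat.strong_induction_on with
  | _ j ih =>
    rcases eq_or_lt_of_le h with h1 | h1
    · rw [← h1, kfib_one k hk]
    · rw [kfib_rec k j hk (by omega)]
      have h0 : (1 : ℤ) ≤ kfib k (j - 1 - 0) := ih (j - 1 - 0) (by omega) (by omega)
      calc (1:ℤ) ≤ kfib k (j - 1 - 0) := h0
        _ ≤ ∑ i ∈ Finset.range k, kfib k (j - 1 - i) :=
          Finset.single_le_sum (f := fun i => kfib k (j - 1 - i))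
            (fun i _ => kfib_nonneg k _) (Finset.mem_range.mpr (by omega))

lemma kfib_two_step (k j : ℕ) (hk : 2 ≤ k) (h : k ≤ j) :
    kfib k (j + 1) = 2 * kfib k j - kfib k (j - k) := by
  have h1 : kfib k (j+1) = ∑ i ∈ Finset.range k, kfib k (j - i) := by
    rw [kfib_rec k (j+1) hk (by omega)]
    apply Finset.sum_congr rfl
    intro i hi
    have h5 : j + 1 - 1 - i = j - i := by omega
    rw [h5]
  have h2 : kfib k j = ∑ i ∈ Finset.range k, kfib k (j - 1 - i) := kfib_rec k j hk h
  -- reindex : ∑_{i<k} kfib (j-i) = kfib j + ∑_{i<k-1} kfib (j-1-i)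
  obtain ⟨k', rfl⟩ : ∃ k', k = k' + 1 := ⟨k - 1, by omega⟩
  rw [Finset.sum_range_succ'] at h1
  rw [Finset.sum_range_succ] at h2
  have h3 : ∑ i ∈ Finset.range k', kfib (k'+1) (j - (i+1)) = ∑ i ∈ Finset.range k', kfib (k'+1) (j - 1 - i) := by
    apply Finset.sum_congr rfl
    intro i hi
    have h5 : j - (i+1) = j - 1 - i := by omega
    rw [h5]
  rw [h3, Nat.sub_zero] at h1
  have h4 : j - 1 - k' = j - (k' + 1) := by omega
  rw [h4] at h2
  omega

lemma kfib_kk (k : ℕ) (hk : 2 ≤ k) : kfib k k = 1 := by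
  rw [kfib_rec k k hk le_rfl]
  rw [Finset.sum_eq_single 0]
  · have : k - 1 - 0 = k - 1 := by omega
    rw [this, kfib_one k hk]
  · intro i hi hne
    exact kfib_zero k _ hk (by simp at hi; omega)
  · intro h; simp at h; omega

lemma pell_formula (ℓ : ℕ) :
    (pell ℓ : ℝ) * (2 * Real.sqrt 2) = (1 + Real.sqrt 2) ^ ℓ - (1 - Real.sqrt 2) ^ ℓ := by
  have h2 : Real.sqrt 2 ^ 2 = 2 := Real.sq_sqrt (by norm_num)
  induction ℓ using Nat.strong_induction_on with
  | _ ℓ ih =>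
    match ℓ with
    | 0 => simp [pell]
    | 1 => simp [pell]; ring
    | (n+2) =>
      have i1 := ih (n+1) (by omega)
      have i0 := ih n (by omega)
      show (↑(2 * pell (n + 1) + pell n) : ℝ) * (2 * Real.sqrt 2) = _
      push_cast
      have e1 : (1 + Real.sqrt 2) ^ (n+2) = (2 * (1 + Real.sqrt 2) + 1) * (1 + Real.sqrt 2) ^ n := by
        have : (1 + Real.sqrt 2) ^ 2 = 2 * (1 + Real.sqrt 2) + 1 := by nlinarith [h2]
        rw [pow_add, this]; ring
      have e2 : (1 - Real.sqrt 2) ^ (n+2) = (2 * (1 - Real.sqrt 2) + 1) * (1 - Real.sqrt 2) ^ n := by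
        have : (1 - Real.sqrt 2) ^ 2 = 2 * (1 - Real.sqrt 2) + 1 := by nlinarith [h2]
        rw [pow_add, this]; ring
      rw [e1, e2]
      have e3 : (1 + Real.sqrt 2) ^ (n+1) = (1 + Real.sqrt 2) * (1 + Real.sqrt 2) ^ n := by ring
      have e4 : (1 - Real.sqrt 2) ^ (n+1) = (1 - Real.sqrt 2) * (1 - Real.sqrt 2) ^ n := by ring
      rw [e3, e4] at i1
      nlinarith [i1, i0]

section alpha
variable (k : ℕ) (α : ℝ)

lemma alpha_key (hα : 1 < α) (hroot : α ^ k = ∑ i ∈ Finset.range k, α ^ i) :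
    α ^ k * (2 - α) = 1 := by
  have := geom_sum_mul (x := α) (n := k)
  rw [← hroot] at this
  nlinarith [this]

lemma alpha_lt_two (hk : 3 ≤ k) (hα : 1 < α)
    (hroot : α ^ k = ∑ i ∈ Finset.range k, α ^ i) : α < 2 := by
  have hkey := alpha_key k α hα hroot
  have hp : (0:ℝ) < α ^ k := pow_pos (by linarith) k
  nlinarith [hkey, hp]

lemma alpha_gt (hk : 3 ≤ k) (hα : 1 < α)
    (hroot : α ^ k = ∑ i ∈ Finset.range k, α ^ i) : 7/4 < α := by
  by_contra hc
  push_neg at hc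
  have hsub : ({k-3, k-2, k-1} : Finset ℕ) ⊆ Finset.range k := by
    intro x hx; simp at hx; simp; omega
  have hbig : ∑ i ∈ ({k-3, k-2, k-1} : Finset ℕ), α ^ i ≤ ∑ i ∈ Finset.range k, α ^ i :=
    Finset.sum_le_sum_of_subset_of_nonneg hsub
      (fun i _ _ => le_of_lt (pow_pos (by linarith) i))
  have hcard : ∑ i ∈ ({k-3, k-2, k-1} : Finset ℕ), α ^ i
      = α ^ (k-3) + α ^ (k-2) + α ^ (k-1) := by
    rw [Finset.sum_insert (by simp; omega), Finset.sum_insert (by simp; omega),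
      Finset.sum_singleton]
    ring
  have hk3 : α ^ k = α ^ (k-3) * α ^ 3 := by
    rw [← pow_add]; congr 1; omega
  have hk2 : α ^ (k-2) = α ^ (k-3) * α := by
    rw [← pow_succ]; congr 1; omega
  have hk1 : α ^ (k-1) = α ^ (k-3) * α ^ 2 := by
    rw [← pow_add]; congr 1; omega
  have hp3 : (0:ℝ) < α ^ (k-3) := pow_pos (by linarith) _
  have hs : α ^ (k-3) + α ^ (k-2) + α ^ (k-1) ≤ α ^ k := by
    rw [hroot]; linarith [hbig, hcard]
  have h13 : 1 + α + α ^ 2 ≤ α ^ 3 :=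
    le_of_mul_le_mul_left (by nlinarith [hs, hk3, hk2, hk1]) hp3
  nlinarith [h13, hα, hc]

lemma alpha_pow_gt (hk : 3 ≤ k) (hα : 1 < α)
    (hroot : α ^ k = ∑ i ∈ Finset.range k, α ^ i) : (3 * k - 1 : ℝ) / 2 < α ^ k := by
  have h74 := alpha_gt k α hk hα hroot
  have base : ∀ j : ℕ, 3 ≤ j → (3 * j - 1 : ℝ) / 2 < (7/4 : ℝ) ^ j := by
    intro j hj
    induction j, hj using Nat.le_induction with
    | base => norm_num
    | succ i hi ih =>
      have hiR : (3:ℝ) ≤ (i:ℝ) := by exact_mod_cast hi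
      rw [pow_succ]
      push_cast
      linarith [ih]
  have hb := base k hk
  have : (7/4:ℝ) ^ k < α ^ k := by
    apply pow_lt_pow_left₀ h74 (by norm_num)
    omega
  linarith

end alpha

set_option maxHeartbeats 1000000 in
/-- If positive integers `(n, m, k, ℓ)` satisfy `F⁽ᵏ⁾_n · F⁽ᵏ⁾_m = P_ℓ` with `k ≥ 3`,
`n > m ≥ 3` and `n ≥ k + 2`, then
`|γ^ℓ · α^(-(n-1)) · (2√2 f_k(α) F⁽ᵏ⁾_m)⁻¹ - 1| < 3/α^n`, where `γ = 1 + √2`, `α` is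
the dominant root of `Ψₖ`, and `f_k(z) = (z-1)/(2 + (k+1)(z-2))`. -/
theorem second_linear_form (n m k ℓ : ℕ) (hk : 3 ≤ k) (hm : 3 ≤ m) (hmn : m < n)
    (hn : k + 2 ≤ n) (hℓ : 0 < ℓ)
    (heq : kfib k (n + k - 2) * kfib k (m + k - 2) = pell ℓ)
    (α : ℝ) (hα : 1 < α) (hroot : α ^ k = ∑ i ∈ Finset.range k, α ^ i) :
    |(1 + Real.sqrt 2) ^ ℓ * α ^ (-((n : ℤ) - 1)) *
        (2 * Real.sqrt 2 * ((α - 1) / (2 + (k + 1) * (α - 2))) *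
          (kfib k (m + k - 2) : ℝ))⁻¹ - 1| <
      3 / α ^ n := by
  have hk2 : 2 ≤ k := by omega
  have hα0 : (0:ℝ) < α := by linarith
  have hα2 : α < 2 := alpha_lt_two k α hk hα hroot
  have h74 : 7/4 < α := alpha_gt k α hk hα hroot
  have hkey : α ^ k * (2 - α) = 1 := alpha_key k α hα hroot
  have hkk : α ^ (k+1) = 2 * α ^ k - 1 := by
    have h : α ^ (k+1) = α ^ k * α := by ring
    nlinarith [hkey]
  have hpowk : (3 * k - 1 : ℝ) / 2 < α ^ k := alpha_pow_gt k α hk hα hroot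
  have hkR : (3:ℝ) ≤ (k:ℝ) := by exact_mod_cast hk
  have hden : (0:ℝ) < α ^ (k+1) - k := by nlinarith [hpowk, hkk]
  have hαkpos : (0:ℝ) < α ^ k := pow_pos hα0 k
  -- the constant g
  obtain ⟨g, hgdef0⟩ : ∃ g : ℝ, g = (α ^ k - 1) / (α ^ (k+1) - (k:ℝ)) := ⟨_, rfl⟩
  have hgdef : g * (α ^ (k+1) - k) = α ^ k - 1 := by
    rw [hgdef0]; exact div_mul_cancel₀ _ (ne_of_gt hden)
  have hghalf : 1/2 < g := by
    rw [hgdef0, lt_div_iff₀ hden]; nlinarith [hkk, hkR]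
  have hg34 : g < 3/4 := by
    rw [hgdef0, div_lt_iff₀ hden]; nlinarith [hkk, hpowk]
  have hgpos : 0 < g := by linarith
  -- g matches the expression in the statement
  have hden2 : (2 + ((k:ℝ) + 1) * (α - 2)) * α ^ k = α ^ (k+1) - k := by
    linear_combination (k:ℝ) * hkk
  have hden2pos : (0:ℝ) < 2 + ((k:ℝ) + 1) * (α - 2) := by
    nlinarith [hden, hαkpos, hden2]
  have hgeq : (α - 1) / (2 + ((k:ℝ) + 1) * (α - 2)) = g := by
    rw [hgdef0, div_eq_div_iff (ne_of_gt hden2pos) (ne_of_gt hden)]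
    linear_combination (α - (k:ℝ)) * hkk
  -- real-valued sequence
  obtain ⟨F, hF⟩ : ∃ F : ℕ → ℝ, F = fun j => ((kfib k j : ℤ) : ℝ) := ⟨_, rfl⟩
  have hF0 : ∀ j, j < k - 1 → F j = 0 := fun j hj => by
    simp [hF, kfib_zero k j hk2 hj]
  have hFk1 : F (k-1) = 1 := by simp [hF, kfib_one k hk2]
  have hFk : F k = 1 := by simp [hF, kfib_kk k hk2]
  have hFstep : ∀ j, k ≤ j → F (j+1) = 2 * F j - F (j - k) := fun j hj => by
    simp only [hF]
    rw [kfib_two_step k j hk2 hj]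
    push_cast; ring
  have hFpos : ∀ j, k - 1 ≤ j → 1 ≤ F j := fun j hj => by
    simp only [hF]; exact_mod_cast kfib_pos k j hk2 hj
  -- telescoping invariant
  have hW0 : (∑ i ∈ Finset.range k, α ^ i * F (0 + (k - 1 - i))) = 1 := by
    rw [Finset.sum_eq_single 0]
    · simp [hFk1]
    · intro i hi hne
      rw [hF0 (0 + (k-1-i)) (by simp at hi; omega)]
      ring
    · intro h; simp at h; omega
  have hWstep : ∀ t : ℕ,
      α ^ k * F (k + (t+1)) - (∑ i ∈ Finset.range k, α ^ i * F ((t+1) + (k - 1 - i)))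
        = α * (α ^ k * F (k + t) - ∑ i ∈ Finset.range k, α ^ i * F (t + (k - 1 - i))) := by
    intro t
    have hA : ∑ i ∈ Finset.range k, α ^ i * F ((t+1) + (k-1-i))
        = ∑ i ∈ Finset.range k, α ^ i * F (t + k - i) := by
      apply Finset.sum_congr rfl
      intro i hi
      have h1 : (t+1) + (k-1-i) = t + k - i := by simp at hi; omega
      rw [h1]
    have hB : α * (∑ i ∈ Finset.range k, α ^ i * F (t + (k-1-i)))
        = (∑ i ∈ Finset.range k, α ^ i * F (t + k - i)) + α ^ k * F t - F (k + t) := by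
      have key := Finset.sum_range_succ' (fun i => α ^ i * F (t + k - i)) k
      have key2 := Finset.sum_range_succ (fun i => α ^ i * F (t + k - i)) k
      have hC1 : ∑ i ∈ Finset.range k, α ^ (i+1) * F (t + k - (i+1))
          = (∑ i ∈ Finset.range k, α ^ i * F (t + k - i)) + α ^ k * F (t + k - k)
            - α ^ 0 * F (t + k - 0) := by
        linarith [key, key2]
      have hC2 : α * (∑ i ∈ Finset.range k, α ^ i * F (t + (k-1-i)))
          = ∑ i ∈ Finset.range k, α ^ (i+1) * F (t + k - (i+1)) := by
        rw [Finset.mul_sum]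
        apply Finset.sum_congr rfl
        intro i hi
        have h1 : t + (k-1-i) = t + k - (i+1) := by simp at hi; omega
        rw [h1, pow_succ]
        ring
      have e1 : t + k - k = t := by omega
      have e2 : t + k - 0 = k + t := by omega
      rw [hC2, hC1, e1, e2, pow_zero, one_mul]
    have h2s : F (k + (t+1)) = 2 * F (k + t) - F t := by
      have h3 := hFstep (k + t) (by omega)
      have e1 : k + (t+1) = (k+t) + 1 := by omega
      have e2 : k + t - k = t := by omega
      rw [e1, h3, e2]
    linear_combination (α ^ k) * h2s - hA + hB + F (k + t) * hkey
  have hWt : ∀ t : ℕ,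
      α ^ k * F (k + t) - (∑ i ∈ Finset.range k, α ^ i * F (t + (k - 1 - i)))
        = α ^ t * (α ^ k - 1) := by
    intro t
    induction t with
    | zero =>
      rw [hW0]
      simp only [Nat.add_zero, hFk, pow_zero]
      ring
    | succ t ih =>
      rw [hWstep t, ih, pow_succ]
      ring
  -- Claim A: convex-combination identity for the error sequence C j = α^k F j - g α^(j+1)
  have hclaim : ∀ t : ℕ,
      α ^ k * (α ^ k * F (k + t) - g * α ^ ((k + t) + 1)) =
        ∑ i ∈ Finset.range k,
          α ^ i * (α ^ k * F (t + (k - 1 - i)) - g * α ^ ((t + (k - 1 - i)) + 1)) := by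
    intro t
    have hsum : ∑ i ∈ Finset.range k,
          α ^ i * (α ^ k * F (t + (k - 1 - i)) - g * α ^ ((t + (k - 1 - i)) + 1))
        = α ^ k * (∑ i ∈ Finset.range k, α ^ i * F (t + (k - 1 - i)))
            - (k:ℝ) * (g * α ^ (t + k)) := by
      have hterm : ∀ i ∈ Finset.range k,
          α ^ i * (α ^ k * F (t + (k - 1 - i)) - g * α ^ ((t + (k - 1 - i)) + 1))
            = α ^ k * (α ^ i * F (t + (k - 1 - i))) - g * α ^ (t + k) := by
        intro i hi
        have hx : α ^ i * α ^ (t + (k - 1 - i) + 1) = α ^ (t + k) := by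
          rw [← pow_add]; congr 1; simp at hi; omega
        linear_combination (-g) * hx
      rw [Finset.sum_congr rfl hterm, Finset.sum_sub_distrib, Finset.sum_const,
        Finset.card_range, ← Finset.mul_sum]
      simp only [nsmul_eq_mul]
    have hw := hWt t
    rw [hsum]
    linear_combination α ^ k * hw - α ^ t * α ^ k * hgdef
  -- Dresden-type estimate
  have hdres : ∀ j : ℕ, |α ^ k * F j - g * α ^ (j+1)| < α ^ k / 2 := by
    intro j
    induction j using Nat.strong_induction_on with
    | _ j ih =>
      rcases Nat.lt_or_ge j (k-1) with hj | hj
      · rw [hF0 j hj]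
        have h1 : α ^ (j+1) ≤ α ^ (k-1) := pow_le_pow_right₀ (le_of_lt hα) (by omega)
        have h2 : α ^ k = α ^ (k-1) * α := by rw [← pow_succ]; congr 1; omega
        have h3 : (0:ℝ) < α ^ (j+1) := pow_pos hα0 _
        have h4 : (0:ℝ) < α ^ (k-1) := pow_pos hα0 _
        rw [mul_zero, zero_sub, abs_neg, abs_of_pos (by positivity)]
        have h5 : g * α ^ (j+1) ≤ g * α ^ (k-1) :=
          mul_le_mul_of_nonneg_left h1 (le_of_lt hgpos)
        have h6 : g * α ^ (k-1) < (α/2) * α ^ (k-1) :=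
          mul_lt_mul_of_pos_right (by linarith) h4
        have h7 : (α/2) * α ^ (k-1) = α ^ k / 2 := by rw [h2]; ring
        linarith
      · rcases Nat.eq_or_lt_of_le hj with hj1 | hj1
        · rw [← hj1, hFk1]
          have h2 : α ^ ((k-1)+1) = α ^ k := by congr 1; omega
          rw [h2, mul_one]
          have hpos : (0:ℝ) < α ^ k - g * α ^ k := by nlinarith [hαkpos, hg34]
          rw [abs_of_pos hpos]
          have h8 := mul_pos hαkpos (show (0:ℝ) < g - 1/2 by linarith)
          have h9 : α ^ k * (g - 1/2) = g * α ^ k - α ^ k / 2 := by ring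
          linarith
        · -- j ≥ k
          obtain ⟨t, rfl⟩ : ∃ t, j = k + t := ⟨j - k, by omega⟩
          have hcl := hclaim t
          have habs : |∑ i ∈ Finset.range k,
              α ^ i * (α ^ k * F (t + (k - 1 - i)) - g * α ^ ((t + (k - 1 - i)) + 1))|
              < α ^ k * (α ^ k / 2) := by
            calc |∑ i ∈ Finset.range k,
                α ^ i * (α ^ k * F (t + (k - 1 - i)) - g * α ^ ((t + (k - 1 - i)) + 1))|
                ≤ ∑ i ∈ Finset.range k,
                  |α ^ i * (α ^ k * F (t + (k - 1 - i)) - g * α ^ ((t + (k - 1 - i)) + 1))| :=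
                  Finset.abs_sum_le_sum_abs _ _
              _ < ∑ i ∈ Finset.range k, α ^ i * (α ^ k / 2) := by
                  apply Finset.sum_lt_sum_of_nonempty
                  · exact Finset.nonempty_range_iff.mpr (by omega)
                  · intro i hi
                    rw [abs_mul, abs_of_pos (pow_pos hα0 i)]
                    exact mul_lt_mul_of_pos_left (ih _ (by simp at hi; omega)) (pow_pos hα0 i)
              _ = α ^ k * (α ^ k / 2) := by
                  rw [← Finset.sum_mul, ← hroot]
          rw [← hcl, abs_mul, abs_of_pos hαkpos] at habs
          exact lt_of_mul_lt_mul_left habs (le_of_lt hαkpos)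
  -- specialize to index n
  have hdresN : |F (n + k - 2) - g * α ^ (n-1)| < 1/2 := by
    have h1 := hdres (n + k - 2)
    have h2 : α ^ ((n + k - 2) + 1) = α ^ (n-1) * α ^ k := by
      rw [← pow_add]; congr 1; omega
    rw [h2] at h1
    have h3 : α ^ k * F (n + k - 2) - g * (α ^ (n-1) * α ^ k)
        = α ^ k * (F (n + k - 2) - g * α ^ (n-1)) := by ring
    rw [h3, abs_mul, abs_of_pos hαkpos] at h1
    have := lt_of_mul_lt_mul_left h1 (le_of_lt hαkpos)
    linarith
  -- Pell side
  have heqR : F (n + k - 2) * F (m + k - 2) = (pell ℓ : ℝ) := by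
    simp only [hF]
    exact_mod_cast heq
  have hs2 : Real.sqrt 2 ^ 2 = 2 := Real.sq_sqrt (by norm_num)
  have hs2pos : 0 < Real.sqrt 2 := Real.sqrt_pos.mpr (by norm_num)
  have hs2lt : Real.sqrt 2 < 3/2 := by nlinarith [hs2, hs2pos]
  have hs2gt : 5/4 < Real.sqrt 2 := by nlinarith [hs2, hs2pos]
  have hdel : |(1 - Real.sqrt 2) ^ ℓ| ≤ Real.sqrt 2 - 1 := by
    rw [abs_pow, abs_of_neg (by linarith)]
    have h1 : (-(1 - Real.sqrt 2)) ^ ℓ ≤ (-(1 - Real.sqrt 2)) ^ 1 :=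
      pow_le_pow_of_le_one (by linarith) (by linarith) hℓ
    simpa using h1
  -- put everything together
  have hzexp : α ^ (-((n : ℤ) - 1)) = (α ^ (n-1))⁻¹ := by
    have h1 : (-((n:ℤ) - 1)) = -(((n-1 : ℕ) : ℤ)) := by omega
    rw [h1, zpow_neg, zpow_natCast]
  have hFmr : ((kfib k (m + k - 2) : ℤ) : ℝ) = F (m + k - 2) := by rw [hF]
  rw [hgeq, hzexp, hFmr]
  have hFm1 : 1 ≤ F (m + k - 2) := hFpos _ (by omega)
  have hFm0 : 0 < F (m + k - 2) := by linarith
  have hA0 : (0:ℝ) < α ^ (n-1) := pow_pos hα0 _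
  have hpsucc : α ^ n = α ^ (n-1) * α := by rw [← pow_succ]; congr 1; omega
  have hB0 : (0:ℝ) < 2 * Real.sqrt 2 * g * F (m + k - 2) := by positivity
  have hXeq : (1 + Real.sqrt 2) ^ ℓ
        - 2 * Real.sqrt 2 * g * F (m + k - 2) * α ^ (n-1)
      = (1 - Real.sqrt 2) ^ ℓ
        + 2 * Real.sqrt 2 * F (m + k - 2) * (F (n + k - 2) - g * α ^ (n-1)) := by
    linear_combination (-1 : ℝ) * pell_formula ℓ - 2 * Real.sqrt 2 * heqR
  have hX : |(1 + Real.sqrt 2) ^ ℓ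
        - 2 * Real.sqrt 2 * g * F (m + k - 2) * α ^ (n-1)|
      < (Real.sqrt 2 - 1) + Real.sqrt 2 * F (m + k - 2) := by
    rw [hXeq]
    calc |(1 - Real.sqrt 2) ^ ℓ
          + 2 * Real.sqrt 2 * F (m + k - 2) * (F (n + k - 2) - g * α ^ (n-1))|
        ≤ |(1 - Real.sqrt 2) ^ ℓ|
          + |2 * Real.sqrt 2 * F (m + k - 2)| * |F (n + k - 2) - g * α ^ (n-1)| := by
          rw [← abs_mul]; exact abs_add_le _ _
      _ < (Real.sqrt 2 - 1) + (2 * Real.sqrt 2 * F (m + k - 2)) * (1/2) := by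
          have h1 : |2 * Real.sqrt 2 * F (m + k - 2)| = 2 * Real.sqrt 2 * F (m + k - 2) := by
            rw [abs_of_pos (by positivity)]
          rw [h1]
          have h2 := mul_lt_mul_of_pos_left hdresN (show (0:ℝ) < 2 * Real.sqrt 2 * F (m+k-2) by positivity)
          linarith [hdel, h2]
      _ = (Real.sqrt 2 - 1) + Real.sqrt 2 * F (m + k - 2) := by ring
  have hsuff : |(1 + Real.sqrt 2) ^ ℓ
        - 2 * Real.sqrt 2 * g * F (m + k - 2) * α ^ (n-1)| * α
      < 3 * (2 * Real.sqrt 2 * g * F (m + k - 2)) := by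
    have h1 : |(1 + Real.sqrt 2) ^ ℓ
        - 2 * Real.sqrt 2 * g * F (m + k - 2) * α ^ (n-1)| * α
        < ((Real.sqrt 2 - 1) + Real.sqrt 2 * F (m + k - 2)) * α :=
      mul_lt_mul_of_pos_right hX hα0
    have h2 : ((Real.sqrt 2 - 1) + Real.sqrt 2 * F (m + k - 2)) * α
        ≤ 3 * (2 * Real.sqrt 2 * g * F (m + k - 2)) := by
      nlinarith [hFm1, hghalf, hα2, hs2gt, hs2lt, hα0,
        mul_nonneg (le_of_lt hs2pos) (by linarith : (0:ℝ) ≤ F (m+k-2) - 1),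
        mul_nonneg (by linarith : (0:ℝ) ≤ 2*g - 1) (by linarith : (0:ℝ) ≤ F (m+k-2)),
        mul_nonneg (mul_nonneg (by linarith : (0:ℝ) ≤ 2*g - 1) (by linarith : (0:ℝ) ≤ F (m+k-2))) (le_of_lt hs2pos)]
    linarith
  have hrw : (1 + Real.sqrt 2) ^ ℓ * (α ^ (n-1))⁻¹
        * (2 * Real.sqrt 2 * g * F (m + k - 2))⁻¹ - 1
      = ((1 + Real.sqrt 2) ^ ℓ - 2 * Real.sqrt 2 * g * F (m + k - 2) * α ^ (n-1))
        / (2 * Real.sqrt 2 * g * F (m + k - 2) * α ^ (n-1)) := by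
    field_simp
  have hden3 : (0:ℝ) < 2 * Real.sqrt 2 * g * F (m + k - 2) * α ^ (n-1) :=
    mul_pos hB0 hA0
  rw [hrw, abs_div, abs_of_pos hden3, div_lt_div_iff₀ hden3 (pow_pos hα0 n)]
  rw [hpsucc]
  nlinarith [mul_lt_mul_of_pos_right hsuff hA0, hA0]
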